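/- Let A be a finite subset of R^q, ρ ∈ R^q with a < ρ for all a ∈ A, and y ∈ R^q with y < ρ. Suppose that for every a ∈ A there exists ε > 0 and an index ℓ with y_ℓ + ε < a_ℓ, with ε uniform over A and y + ε·1 ≤ ρ. Then HI(A ∪ {y}) − HI(A) ≥ ε^q. -/

import Mathlib

/-!
The cube `[y, y + ε·1]` has volume `ε^q`, lies in the new box `[y, ρ]`, and misses every old
box `[a, ρ]`, because in the coordinate `ℓ` with `y ℓ + ε < a ℓ` it stays strictly below `a ℓ`.
Hence it lies in the part of `HI(A ∪ {y})` that `HI(A)` does not cover.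
-/

open MeasureTheory

variable {ι : Type*}

theorem Real.volume_Icc_add_const_pi [Fintype ι] (y : ι → ℝ) {ε : ℝ} (hε : 0 ≤ ε) :
    volume (Set.Icc y fun i => y i + ε) = ENNReal.ofReal (ε ^ Fintype.card ι) := by
  simp [Real.volume_Icc_pi, ENNReal.ofReal_pow hε]

theorem disjoint_Icc_add_const_biUnion_Icc {S : Set (ι → ℝ)} {y ρ : ι → ℝ} {ε : ℝ}
    (hnd : ∀ a ∈ S, ∃ ℓ, y ℓ + ε < a ℓ) :
    Disjoint (Set.Icc y fun i => y i + ε) (⋃ a ∈ S, Set.Icc a ρ) := by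
  refine Set.disjoint_left.2 fun x hx hxU => ?_
  simp only [Set.mem_iUnion, Set.mem_Icc] at hxU
  obtain ⟨a, ha, hax, -⟩ := hxU
  obtain ⟨ℓ, hℓ⟩ := hnd a ha
  linarith [hx.2 ℓ, hax ℓ]

theorem volume_biUnion_Icc_ne_top [Fintype ι] (A : Finset (ι → ℝ)) (ρ : ι → ℝ) :
    volume (⋃ a ∈ A, Set.Icc a ρ) ≠ ⊤ :=
  (measure_biUnion_lt_top A.finite_toSet fun _ _ => isCompact_Icc.measure_lt_top).ne

theorem stmt14_general {q : ℕ} (A : Finset (Fin q → ℝ)) (ρ y : Fin q → ℝ)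
    (ε : ℝ) (hε : 0 < ε) (hyρ : ∀ i, y i + ε ≤ ρ i)
    (hnd : ∀ a ∈ A, ∃ ℓ, y ℓ + ε < a ℓ) :
    ENNReal.ofReal (ε ^ q) ≤
      volume (⋃ a ∈ (insert y A : Finset (Fin q → ℝ)), Set.Icc a ρ) -
        volume (⋃ a ∈ A, Set.Icc a ρ) := by
  set U := ⋃ a ∈ A, Set.Icc a ρ
  have hcube_sub : (Set.Icc y fun i => y i + ε) ⊆ Set.Icc y ρ :=
    Set.Icc_subset_Icc le_rfl hyρ
  have hU_meas : MeasurableSet U :=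
    A.finite_toSet.measurableSet_biUnion fun _ _ => measurableSet_Icc
  rw [Finset.set_biUnion_insert, ← measure_sdiff Set.subset_union_right
    hU_meas.nullMeasurableSet (volume_biUnion_Icc_ne_top A ρ)]
  calc ENNReal.ofReal (ε ^ q)
      = volume (Set.Icc y fun i => y i + ε) := by
        simpa using (Real.volume_Icc_add_const_pi y hε.le).symm
    _ ≤ volume ((Set.Icc y ρ ∪ U) \ U) := by
        refine measure_mono fun x hx => ⟨Or.inl (hcube_sub hx), fun hxU => ?_⟩
        exact Set.disjoint_left.1 (disjoint_Icc_add_const_biUnion_Icc hnd) hx hxU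

/-- If `y` is uniformly non-dominated with margin `ε > 0` (for every `a ∈ A` some coordinate
`ℓ` satisfies `y ℓ + ε < a ℓ`) and `y + ε·1 ≤ ρ` componentwise, then the hypervolume increases
by at least `ε^q`. -/
theorem stmt14 {q : ℕ} (A : Finset (Fin q → ℝ)) (ρ y : Fin q → ℝ)
    (hdomA : ∀ a ∈ A, ∀ i, a i < ρ i) (hy : ∀ i, y i < ρ i)
    (ε : ℝ) (hε : 0 < ε) (hyρ : ∀ i, y i + ε ≤ ρ i)
    (hnd : ∀ a ∈ A, ∃ ℓ, y ℓ + ε < a ℓ) :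
    ENNReal.ofReal (ε ^ q) ≤
      volume (⋃ a ∈ (insert y A : Finset (Fin q → ℝ)), Set.Icc a ρ) -
        volume (⋃ a ∈ A, Set.Icc a ρ) :=
  stmt14_general A ρ y ε hε hyρ hnd
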